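/- arXiv:2401.10881 — 4 statements merged into one kernel-verified Lean document; each statement's English description precedes it below -/
import Mathlib

section
/- Let μ lie in the open unit disk of ℂ and let G belong to 𝔙₊ on a neighborhood of 0 with first-order invariant μ. Then there exist an open disk U centered at 0 on which G is defined, smooth functions a_k : U → ℂ for k ≥ 0, and a constant C > 0 such that: |a_k(z)| ≤ C^{k+1}·|z|^{2k+2} for all k ≥ 1 and z ∈ U; the series ∑_{k=1}^∞ a_k(z)·G_μ(z)^{−k} converges absolutely for every z ∈ U∖{0}; and for every z ∈ U∖{0}, G(z)·Log(G(z)/G_μ(z)) = a₀(z) + ∑_{k=1}^∞ a_k(z)·G_μ(z)^{−k}, where Log is the principal branch of the complex logarithm (note G(z)/G_μ(z) → 1 as z → 0, so the principal branch applies for U small enough). Equivalently, the multi-valued germ G·ln G is a linear combination of the functions G_μ(z)^{−k} (k ≥ 1), 1, and ln G_μ(z) with coefficients smooth at 0, the coefficient of ln G_μ(z) being G itself. -/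
open Complex Metric Set Filter

noncomputable section

/-- Partial derivative in the `y` direction of the imaginary part of `G` at `z`. -/
def imPartialY (G : ℂ → ℂ) (z : ℂ) : ℝ :=
  deriv (fun t : ℝ => (G (z.re + t * Complex.I)).im) z.im

/-- `G` belongs to `𝔙₊` on the open set `U ∋ 0`: it is smooth (in the real sense), fixes `0`,
preserves the real part, and the `y`-partial derivative of its imaginary part is positive. -/
def MemVplus (G : ℂ → ℂ) (U : Set ℂ) : Prop :=
  IsOpen U ∧ (0 : ℂ) ∈ U ∧ ContDiffOn ℝ (⊤ : ℕ∞) G U ∧ G 0 = 0 ∧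
    (∀ z ∈ U, (G z).re = z.re) ∧ ∀ z ∈ U, 0 < imPartialY G z

/-- Preimage of the punctured set `U \ {0}` under the exponential covering. -/
def expPre (U : Set ℂ) : Set ℂ := Complex.exp ⁻¹' (U \ {0})

/-- `Λ` is a logarithm lift of `G` over `U`: it is smooth on `exp ⁻¹ (U \ {0})` and satisfies
`exp (Λ w) = G (exp w)` there. -/
def IsLogLift (G Λ : ℂ → ℂ) (U : Set ℂ) : Prop :=
  ContDiffOn ℝ (⊤ : ℕ∞) Λ (expPre U) ∧ ∀ w ∈ expPre U, Complex.exp (Λ w) = G (Complex.exp w)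

/-- Two maps defined near `0 ∈ ℂ` have the same infinite jet at `0`:
all iterated derivatives of their difference vanish at `0`. -/
def SameInfiniteJetAt0 {E : Type*} [NormedAddCommGroup E] [NormedSpace ℝ E]
    (f g : ℂ → E) : Prop :=
  ∀ n : ℕ, iteratedFDeriv ℝ n (fun z => f z - g z) 0 = 0

/-- The real-linear model map `G_μ`. -/
def Gmu (μ : ℂ) (z : ℂ) : ℂ := z / (1 + starRingEnd ℂ μ) + μ * starRingEnd ℂ z / (1 + μ)

/-- The inverse of the real-linear map `G_μ` (for `|μ| < 1`). -/
def GmuInv (μ : ℂ) (w : ℂ) : ℂ :=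
  ((1 + μ)⁻¹ * w - μ * (1 + μ)⁻¹ * starRingEnd ℂ w) /
    (((1 - Complex.normSq μ) / Complex.normSq (1 + μ) : ℝ) : ℂ)

/-- The antiholomorphic Wirtinger derivative `∂̄ = ½(∂/∂x + i ∂/∂y)`. -/
def dbar (f : ℂ → ℂ) (z : ℂ) : ℂ :=
  (1 / 2 : ℂ) * (fderiv ℝ f z 1 + Complex.I * fderiv ℝ f z Complex.I)

/-- `G` has first-order invariant `μ`: its real Fréchet derivative at `0` equals `G_μ`. -/
def HasFirstOrderInvariant (G : ℂ → ℂ) (μ : ℂ) : Prop :=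
  ∀ z : ℂ, fderiv ℝ G 0 z = Gmu μ z

/-- `G` is `μ`-liftable: `∂̄^q (G ∘ G_μ⁻¹) (0) = 0` for all `q ≥ 1`. -/
def MuLiftable (μ : ℂ) (G : ℂ → ℂ) : Prop :=
  ∀ q : ℕ, 1 ≤ q → (dbar^[q] (G ∘ GmuInv μ)) 0 = 0

namespace Stmt3Aux

lemma one_add_ne {μ : ℂ} (hμ : ‖μ‖ < 1) : (1 : ℂ) + μ ≠ 0 := by
  intro h
  have h1 : μ = -1 := by linear_combination h
  rw [h1] at hμ; simp at hμ

/-- `G_μ` as a continuous `ℝ`-linear map. -/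
def Lmu (μ : ℂ) : ℂ →L[ℝ] ℂ :=
  (1 + starRingEnd ℂ μ)⁻¹ • (ContinuousLinearMap.id ℝ ℂ) +
    (μ / (1 + μ)) • (Complex.conjCLE.toContinuousLinearMap)

lemma Lmu_apply (μ z : ℂ) : Lmu μ z = Gmu μ z := by
  simp only [Lmu, Gmu, ContinuousLinearMap.add_apply, ContinuousLinearMap.coe_smul',
    Pi.smul_apply, ContinuousLinearMap.coe_id', id_eq, ContinuousLinearEquiv.coe_coe,
    Complex.conjCLE_apply, smul_eq_mul]
  ring

lemma Gmu_eq_Lmu (μ : ℂ) : Gmu μ = ⇑(Lmu μ) := funext fun z => (Lmu_apply μ z).symm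

lemma Gmu_contDiff (μ : ℂ) : ContDiff ℝ (⊤ : ℕ∞) (Gmu μ) := by
  rw [Gmu_eq_Lmu]; exact (Lmu μ).contDiff

lemma Gmu_lower {μ : ℂ} (hμ : ‖μ‖ < 1) (z : ℂ) :
    (1 - ‖μ‖) / ‖(1 : ℂ) + μ‖ * ‖z‖ ≤ ‖Gmu μ z‖ := by
  have hA : (0:ℝ) < ‖(1:ℂ) + μ‖ := norm_pos_iff.mpr (one_add_ne hμ)
  have h2 : ‖(1:ℂ) + starRingEnd ℂ μ‖ = ‖(1:ℂ) + μ‖ := by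
    have h : (1:ℂ) + starRingEnd ℂ μ = starRingEnd ℂ (1 + μ) := by simp
    rw [h, RCLike.norm_conj]
  have h3 := norm_sub_norm_le (z / (1 + starRingEnd ℂ μ)) (-(μ * starRingEnd ℂ z / (1 + μ)))
  rw [norm_neg, sub_neg_eq_add] at h3
  have h4 : ‖z / (1 + starRingEnd ℂ μ)‖ = ‖z‖ / ‖(1:ℂ)+μ‖ := by rw [norm_div, h2]
  have h5 : ‖μ * starRingEnd ℂ z / (1 + μ)‖ = ‖μ‖ * ‖z‖ / ‖(1:ℂ)+μ‖ := by
    rw [norm_div, norm_mul, RCLike.norm_conj]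
  rw [h4, h5] at h3
  calc (1 - ‖μ‖) / ‖(1:ℂ)+μ‖ * ‖z‖ = ‖z‖ / ‖(1:ℂ)+μ‖ - ‖μ‖ * ‖z‖ / ‖(1:ℂ)+μ‖ := by ring
    _ ≤ ‖Gmu μ z‖ := h3

/-- The shifted Taylor series of `(1+u)·log(1+u) - u` in the unit disk, written in the form
needed below. -/
lemma hasSum_aux {u : ℂ} (hu : ‖u‖ < 1) :
    HasSum (fun k : ℕ =>
        u * ((-1) ^ (k + 1 + 1) * u ^ (k + 1) / (k + 1 : ℕ)) +
          (-1) ^ (k + 2 + 1) * u ^ (k + 2) / (k + 2 : ℕ))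
      (u * Complex.log (1 + u) + (Complex.log (1 + u) - u)) := by
  have hlog := Complex.hasSum_taylorSeries_log hu
  have h2 : HasSum (fun k : ℕ => u * ((-1) ^ (k + 1 + 1) * u ^ (k + 1) / (k + 1 : ℕ)))
      (u * Complex.log (1 + u)) := by
    refine (hasSum_nat_add_iff (f := fun n : ℕ => u * ((-1) ^ (n + 1) * u ^ n / (n : ℕ))) 1).mpr ?_
    simpa using hlog.mul_left u
  have h3 : HasSum (fun k : ℕ => (-1) ^ (k + 2 + 1) * u ^ (k + 2) / (k + 2 : ℕ))
      (Complex.log (1 + u) - u) := by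
    refine (hasSum_nat_add_iff (f := fun n : ℕ => (-1) ^ (n + 1) * u ^ n / (n : ℕ)) 2).mpr ?_
    have h : (Complex.log (1 + u) - u) + ∑ i ∈ Finset.range 2,
        (-1 : ℂ) ^ (i + 1) * u ^ i / (i : ℕ) = Complex.log (1 + u) := by
      simp [Finset.sum_range_succ]
    rw [h]; exact hlog
  exact h2.add h3

/-- The termwise algebraic identity. -/
lemma term_id (w u : ℂ) (hw : w ≠ 0) (k : ℕ) :
    (-1) ^ (k + 1 + 1) * (w * u) ^ (k + 1 + 1) / (((k + 1) * (k + 1 + 1) : ℕ) : ℂ) / w ^ (k + 1)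
      = w * (u * ((-1) ^ (k + 1 + 1) * u ^ (k + 1) / ((k + 1 : ℕ) : ℂ))
          + (-1) ^ (k + 2 + 1) * u ^ (k + 2) / ((k + 2 : ℕ) : ℂ)) := by
  have hk1 : ((k:ℂ) + 1) ≠ 0 := Nat.cast_add_one_ne_zero k
  have hk2 : ((k:ℂ) + 2) ≠ 0 := by
    have h : ((k + 2 : ℕ) : ℂ) ≠ 0 := Nat.cast_ne_zero.mpr (by omega)
    push_cast at h; exact h
  have hwk : w ^ (k + 1) ≠ 0 := pow_ne_zero _ hw
  have hD : (2 + (k:ℂ) * 3 + (k:ℂ) ^ 2) ≠ 0 := by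
    intro h
    apply mul_ne_zero hk1 hk2
    linear_combination h
  rw [div_eq_iff hwk]
  push_cast
  field_simp [hD]
  linear_combination (w ^ 2 * w ^ k * u ^ 2 * u ^ k * (-1 : ℂ) ^ k) * mul_inv_cancel₀ hk2

end Stmt3Aux

open Stmt3Aux in
/-- for `G ∈ 𝔙₊` with first-order invariant `μ`, the multi-valued germ `G ln G`
is, modulo the single-valued term `G ln G_μ`, a convergent series
`a₀(z) + ∑_{k≥1} a_k(z) G_μ(z)^{-k}` with coefficients smooth at `0` satisfying the stated
bounds; equivalently `G(z)·Log(G(z)/G_μ(z)) = a₀(z) + ∑_{k≥1} a_k(z) G_μ(z)^{-k}`. -/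
theorem stmt3 (μ : ℂ) (hμ : ‖μ‖ < 1) (G : ℂ → ℂ)
    (hG : ∃ U : Set ℂ, MemVplus G U) (hfoi : HasFirstOrderInvariant G μ) :
    ∃ r > (0 : ℝ), MemVplus G (Metric.ball 0 r) ∧
      ∃ a : ℕ → ℂ → ℂ, ∃ C > (0 : ℝ),
        (∀ k : ℕ, ContDiffOn ℝ (⊤ : ℕ∞) (a k) (Metric.ball 0 r)) ∧
        (∀ k : ℕ, 1 ≤ k → ∀ z ∈ Metric.ball (0 : ℂ) r,
          ‖a k z‖ ≤ C ^ (k + 1) * ‖z‖ ^ (2 * k + 2)) ∧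
        ∀ z ∈ Metric.ball (0 : ℂ) r \ {0},
          Summable (fun k : ℕ => ‖a (k + 1) z / Gmu μ z ^ (k + 1)‖) ∧
          HasSum (fun k : ℕ => a (k + 1) z / Gmu μ z ^ (k + 1))
            (G z * Complex.log (G z / Gmu μ z) - a 0 z) := by
  obtain ⟨U, hUopen, h0U, hGsm, hG0, hre, him⟩ := hG
  set R : ℂ → ℂ := fun z => G z - Gmu μ z with hRdef
  have hRsm : ContDiffOn ℝ (⊤ : ℕ∞) R U := hGsm.sub (Gmu_contDiff μ).contDiffOn
  have hGdiff : DifferentiableAt ℝ G 0 :=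
    (hGsm.contDiffAt (hUopen.mem_nhds h0U)).differentiableAt (by simp)
  have hGmudiff : Differentiable ℝ (Gmu μ) := (Gmu_contDiff μ).differentiable (by simp)
  have hfR0 : fderiv ℝ R 0 = 0 := by
    have h1 : fderiv ℝ R 0 = fderiv ℝ G 0 - fderiv ℝ (Gmu μ) 0 := fderiv_sub hGdiff (hGmudiff 0)
    have h2 : fderiv ℝ (Gmu μ) 0 = Lmu μ := by rw [Gmu_eq_Lmu]; exact (Lmu μ).fderiv
    ext z
    rw [h1]
    simp [h2, hfoi z, Lmu_apply]
  obtain ⟨r₁, hr₁pos, hr₁⟩ : ∃ r₁ > (0:ℝ), closedBall (0:ℂ) r₁ ⊆ U := by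
    obtain ⟨ε, hε, hball⟩ := Metric.isOpen_iff.1 hUopen 0 h0U
    exact ⟨ε / 2, by linarith, (closedBall_subset_ball (by linarith)).trans hball⟩
  have hfd1 : ContDiffOn ℝ 1 (fderiv ℝ R) U := hRsm.fderiv_of_isOpen hUopen (by norm_cast)
  have hfd2 : ContinuousOn (fderiv ℝ (fderiv ℝ R)) U :=
    hfd1.continuousOn_fderiv_of_isOpen hUopen le_rfl
  obtain ⟨M, hM⟩ := (isCompact_closedBall (0:ℂ) r₁).exists_bound_of_continuousOn (f := fderiv ℝ (fderiv ℝ R)) (hfd2.mono hr₁)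
  set C := max M 1 with hCdef
  have hC1 : (1:ℝ) ≤ C := le_max_right _ _
  have hCpos : (0:ℝ) < C := lt_of_lt_of_le one_pos hC1
  have hdiff1 : ∀ w ∈ closedBall (0:ℂ) r₁, DifferentiableAt ℝ (fderiv ℝ R) w := fun w hw =>
    (hfd1.differentiableOn (by simp)).differentiableAt (hUopen.mem_nhds (hr₁ hw))
  have hbd1 : ∀ w ∈ closedBall (0:ℂ) r₁, ‖fderiv ℝ (fderiv ℝ R) w‖ ≤ C := fun w hw =>
    (hM w hw).trans (le_max_left _ _)
  have hfd_bound : ∀ w ∈ closedBall (0:ℂ) r₁, ‖fderiv ℝ R w‖ ≤ C * ‖w‖ := by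
    intro w hw
    have h6 := Convex.norm_image_sub_le_of_norm_fderiv_le hdiff1 hbd1 (convex_closedBall _ _)
      (mem_closedBall_self hr₁pos.le) hw
    simpa [hfR0] using h6
  have hR0 : R 0 = 0 := by simp [hRdef, hG0, Gmu]
  have hRbd : ∀ z ∈ closedBall (0:ℂ) r₁, ‖R z‖ ≤ C * ‖z‖ ^ 2 := by
    intro z hz
    have hznorm : ‖z‖ ≤ r₁ := by simpa using hz
    have hsub : closedBall (0:ℂ) ‖z‖ ⊆ closedBall 0 r₁ := closedBall_subset_closedBall hznorm
    have hdiff : ∀ w ∈ closedBall (0:ℂ) ‖z‖, DifferentiableAt ℝ R w := fun w hw =>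
      (hRsm.differentiableOn (by simp)).differentiableAt (hUopen.mem_nhds (hr₁ (hsub hw)))
    have hbd : ∀ w ∈ closedBall (0:ℂ) ‖z‖, ‖fderiv ℝ R w‖ ≤ C * ‖z‖ := by
      intro w hw
      refine (hfd_bound w (hsub hw)).trans ?_
      have h7 : ‖w‖ ≤ ‖z‖ := by simpa using hw
      nlinarith
    have hzmem : z ∈ closedBall (0:ℂ) ‖z‖ := by simp [mem_closedBall, dist_zero_right]
    have h8 := Convex.norm_image_sub_le_of_norm_fderiv_le hdiff hbd (convex_closedBall _ _)
      (mem_closedBall_self (norm_nonneg z)) hzmem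
    rw [hR0, sub_zero, sub_zero] at h8
    calc ‖R z‖ ≤ C * ‖z‖ * ‖z‖ := h8
      _ = C * ‖z‖ ^ 2 := by ring
  set c := (1 - ‖μ‖) / ‖(1:ℂ) + μ‖ with hcdef
  have hcpos : (0:ℝ) < c := by
    apply div_pos
    · linarith
    · exact norm_pos_iff.mpr (one_add_ne hμ)
  set r := min r₁ (c / (2 * C)) with hrdef
  have hrpos : (0:ℝ) < r := lt_min hr₁pos (div_pos hcpos (by linarith))
  have hballU : ball (0:ℂ) r ⊆ U :=
    ((ball_subset_ball (min_le_left _ _)).trans ball_subset_closedBall).trans hr₁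
  have hballcb : ball (0:ℂ) r ⊆ closedBall (0:ℂ) r₁ :=
    (ball_subset_ball (min_le_left _ _)).trans ball_subset_closedBall
  refine ⟨r, hrpos, ⟨isOpen_ball, mem_ball_self hrpos, hGsm.mono hballU, hG0,
    fun z hz => hre z (hballU hz), fun z hz => him z (hballU hz)⟩, ?_⟩
  refine ⟨fun k z => if k = 0 then G z - Gmu μ z
    else (-1) ^ (k + 1) * (G z - Gmu μ z) ^ (k + 1) / ((k * (k + 1) : ℕ) : ℂ),
    C, hCpos, ?_, ?_, ?_⟩
  · -- smoothness
    intro k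
    by_cases hk : k = 0
    · simp only [hk, if_pos rfl]
      exact (hGsm.mono hballU).sub (Gmu_contDiff μ).contDiffOn
    · simp only [if_neg hk]
      exact ContDiffOn.div_const
        (contDiffOn_const.mul (((hGsm.mono hballU).sub (Gmu_contDiff μ).contDiffOn).pow _)) _
  · -- bounds
    intro k hk z hz
    have hk0 : k ≠ 0 := Nat.one_le_iff_ne_zero.mp hk
    simp only [if_neg hk0]
    have h1 : ‖R z‖ ≤ C * ‖z‖ ^ 2 := hRbd z (hballcb hz)
    have hden : (1:ℝ) ≤ ((k * (k + 1) : ℕ) : ℝ) := by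
      have h9 : 1 ≤ k * (k + 1) := Nat.one_le_iff_ne_zero.mpr (by positivity)
      exact_mod_cast h9
    calc ‖(-1:ℂ) ^ (k + 1) * (G z - Gmu μ z) ^ (k + 1) / ((k * (k + 1) : ℕ) : ℂ)‖
        = ‖R z‖ ^ (k + 1) / ((k * (k + 1) : ℕ) : ℝ) := by
          simp only [norm_div, norm_mul, norm_pow, norm_neg, norm_one, one_pow, one_mul,
            Complex.norm_natCast]
          rfl
      _ ≤ ‖R z‖ ^ (k + 1) := div_le_self (by positivity) hden
      _ ≤ (C * ‖z‖ ^ 2) ^ (k + 1) := pow_le_pow_left₀ (norm_nonneg _) h1 _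
      _ = C ^ (k + 1) * ‖z‖ ^ (2 * k + 2) := by
          rw [mul_pow, ← pow_mul, Nat.mul_succ]
  · -- the series
    rintro z ⟨hz, hz0⟩
    rw [mem_singleton_iff] at hz0
    have hznepos : (0:ℝ) < ‖z‖ := norm_pos_iff.mpr hz0
    have hzlt : ‖z‖ < r := by simpa [mem_ball, dist_zero_right] using hz
    have hwlow : c * ‖z‖ ≤ ‖Gmu μ z‖ := Gmu_lower hμ z
    have hwpos : (0:ℝ) < ‖Gmu μ z‖ := lt_of_lt_of_le (by positivity) hwlow
    have hw0 : Gmu μ z ≠ 0 := norm_pos_iff.mp hwpos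
    have hRzbd : ‖G z - Gmu μ z‖ ≤ C * ‖z‖ ^ 2 := hRbd z (hballcb hz)
    obtain ⟨u, hudef⟩ : ∃ u : ℂ, u = (G z - Gmu μ z) / Gmu μ z := ⟨_, rfl⟩
    have hu : ‖u‖ < 1 / 2 := by
      have hz2 : ‖z‖ < c / (2 * C) := lt_of_lt_of_le hzlt (min_le_right _ _)
      have h2C : (0:ℝ) < 2 * C := by linarith
      have h7 : ‖z‖ * (2 * C) < c := (lt_div_iff₀ h2C).mp hz2
      have h8 : 2 * ‖G z - Gmu μ z‖ < ‖Gmu μ z‖ := by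
        nlinarith [mul_lt_mul_of_pos_left h7 hznepos]
      rw [hudef, norm_div, div_lt_iff₀ hwpos]
      linarith
    have hu1 : ‖u‖ < 1 := by linarith
    have hwu : Gmu μ z * u = G z - Gmu μ z := by
      rw [hudef, mul_comm, div_mul_cancel₀ _ hw0]
    have h1u : (1:ℂ) + u = G z / Gmu μ z := by
      rw [hudef]
      field_simp
      ring
    have hterm_eq : ∀ k : ℕ,
        (if k + 1 = 0 then G z - Gmu μ z
          else (-1) ^ (k + 1 + 1) * (G z - Gmu μ z) ^ (k + 1 + 1)
            / (((k + 1) * (k + 1 + 1) : ℕ) : ℂ)) / Gmu μ z ^ (k + 1)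
        = Gmu μ z * (u * ((-1) ^ (k + 1 + 1) * u ^ (k + 1) / ((k + 1 : ℕ) : ℂ))
            + (-1) ^ (k + 2 + 1) * u ^ (k + 2) / ((k + 2 : ℕ) : ℂ)) := by
      intro k
      rw [if_neg (Nat.succ_ne_zero k), ← hwu]
      exact term_id _ u hw0 k
    constructor
    · -- summability of norms
      refine Summable.of_nonneg_of_le (fun k => norm_nonneg _) (fun k => ?_)
        ((summable_geometric_of_lt_one (by norm_num : (0:ℝ) ≤ 1/2) (by norm_num)).mul_left
          ‖Gmu μ z‖)
      show ‖(if k + 1 = 0 then G z - Gmu μ z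
          else (-1) ^ (k + 1 + 1) * (G z - Gmu μ z) ^ (k + 1 + 1)
            / (((k + 1) * (k + 1 + 1) : ℕ) : ℂ)) / Gmu μ z ^ (k + 1)‖
        ≤ ‖Gmu μ z‖ * (1/2) ^ k
      rw [hterm_eq k]
      have hd1 : (1:ℝ) ≤ ((k + 1 : ℕ) : ℝ) := by exact_mod_cast Nat.succ_le_succ (Nat.zero_le k)
      have hd2 : (1:ℝ) ≤ ((k + 2 : ℕ) : ℝ) := by exact_mod_cast (by omega : 1 ≤ k + 2)
      have hu_nonneg : (0:ℝ) ≤ ‖u‖ := norm_nonneg u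
      have hup : ∀ m : ℕ, ‖u‖ ^ m ≤ (1/2 : ℝ) ^ m := fun m => pow_le_pow_left₀ hu_nonneg hu.le m
      have e1 : ‖u * ((-1:ℂ) ^ (k + 1 + 1) * u ^ (k + 1) / ((k + 1 : ℕ) : ℂ))‖
          ≤ (1/2 : ℝ) ^ (k + 1) := by
        simp only [norm_mul, norm_div, norm_pow, norm_neg, norm_one, one_pow, one_mul,
          Complex.norm_natCast]
        calc ‖u‖ * (‖u‖ ^ (k + 1) / ((k + 1 : ℕ) : ℝ))
            ≤ ‖u‖ * ‖u‖ ^ (k + 1) :=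
              mul_le_mul_of_nonneg_left (div_le_self (by positivity) hd1) hu_nonneg
          _ ≤ 1 * (1/2 : ℝ) ^ (k + 1) :=
              mul_le_mul (by linarith) (hup (k + 1)) (by positivity) one_pos.le
          _ = (1/2 : ℝ) ^ (k + 1) := one_mul _
      have e2 : ‖(-1:ℂ) ^ (k + 2 + 1) * u ^ (k + 2) / ((k + 2 : ℕ) : ℂ)‖
          ≤ (1/2 : ℝ) ^ (k + 1) := by
        simp only [norm_mul, norm_div, norm_pow, norm_neg, norm_one, one_pow, one_mul,
          Complex.norm_natCast]
        calc ‖u‖ ^ (k + 2) / ((k + 2 : ℕ) : ℝ)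
            ≤ ‖u‖ ^ (k + 2) := div_le_self (by positivity) hd2
          _ ≤ (1/2 : ℝ) ^ (k + 2) := hup (k + 2)
          _ ≤ (1/2 : ℝ) ^ (k + 1) :=
              pow_le_pow_of_le_one (by norm_num) (by norm_num) (by omega)
      calc ‖Gmu μ z * (u * ((-1) ^ (k + 1 + 1) * u ^ (k + 1) / ((k + 1 : ℕ) : ℂ))
              + (-1) ^ (k + 2 + 1) * u ^ (k + 2) / ((k + 2 : ℕ) : ℂ))‖
          ≤ ‖Gmu μ z‖ * ((1/2 : ℝ) ^ (k + 1) + (1/2 : ℝ) ^ (k + 1)) := by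
            rw [norm_mul]
            exact mul_le_mul_of_nonneg_left ((norm_add_le _ _).trans (add_le_add e1 e2))
              (norm_nonneg _)
        _ = ‖Gmu μ z‖ * (1/2 : ℝ) ^ k := by ring
    · -- the sum
      show HasSum (fun k : ℕ => (if k + 1 = 0 then G z - Gmu μ z
          else (-1) ^ (k + 1 + 1) * (G z - Gmu μ z) ^ (k + 1 + 1)
            / (((k + 1) * (k + 1 + 1) : ℕ) : ℂ)) / Gmu μ z ^ (k + 1))
        (G z * Complex.log (G z / Gmu μ z) - (G z - Gmu μ z))
      have hval : G z * Complex.log (G z / Gmu μ z) - (G z - Gmu μ z)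
          = Gmu μ z * (u * Complex.log (1 + u) + (Complex.log (1 + u) - u)) := by
        rw [← h1u]
        linear_combination (1 - Complex.log (1 + u)) * hwu
      rw [hval]
      have hs := (hasSum_aux hu1).mul_left (Gmu μ z)
      simpa only [hterm_eq] using hs
end
end

section
/- Let G belong to 𝔙₊ on an open disk U centered at 0 in ℂ and let V = exp⁻¹(U∖{0}). Then there exists a logarithm lift Λ of G on V (a smooth Λ : V → ℂ with exp(Λ(w)) = G(exp(w)) for all w ∈ V), and every continuous map Λ : V → ℂ with exp(Λ(w)) = G(exp(w)) for all w ∈ V satisfies Λ(w + 2πi) = Λ(w) + 2πi for all w ∈ V. (That is, the multi-valued logarithm of G has monodromy exactly 2πi, reflecting that G is an orientation-preserving diffeomorphism germ fixing 0.) -/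
open Complex Metric Set Filter

noncomputable section

-- key lemma A
lemma keyA (G : ℂ → ℂ) (r : ℝ) (hr : 0 < r) (hG : MemVplus G (Metric.ball 0 r)) :
    ∀ z ∈ Metric.ball (0:ℂ) r \ {0}, G z / z ∈ Complex.slitPlane := by
  obtain ⟨hU, h0, hcd, hG0, hre, hpy⟩ := hG
  -- strict monotonicity along the imaginary axis
  have hmono : StrictMonoOn (fun s : ℝ => (G (s * I)).im) (Set.Ioo (-r) r) := by
    apply strictMonoOn_of_deriv_pos (convex_Ioo _ _)
    · apply ContinuousOn.comp (f := fun s : ℝ => (s:ℂ) * I)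
        (g := fun z => (G z).im)
      · exact (Complex.continuous_im.comp_continuousOn (hcd.continuousOn))
      · exact (Complex.continuous_ofReal.mul continuous_const).continuousOn
      · intro s hs
        simp only [mem_ball_zero_iff]
        simpa using abs_lt.2 ⟨hs.1, hs.2⟩
    · intro t ht
      rw [interior_Ioo] at ht
      have hmem : (t : ℂ) * I ∈ Metric.ball (0:ℂ) r := by
        simp only [mem_ball_zero_iff]
        simpa using abs_lt.2 ⟨ht.1, ht.2⟩
      have := hpy _ hmem
      have heq : imPartialY G ((t:ℂ) * I) = deriv (fun s : ℝ => (G (s * I)).im) t := by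
        unfold imPartialY
        congr 1
        · funext s
          norm_num
        · simp
      rwa [heq] at this
  -- sign of Im G on the imaginary axis
  have hsign : ∀ y : ℝ, |y| < r → y ≠ 0 → 0 < (G (y * I)).im / y := by
    intro y hy hy0
    have h0mem : (0:ℝ) ∈ Set.Ioo (-r) r := by constructor <;> linarith
    have hymem : y ∈ Set.Ioo (-r) r := ⟨(abs_lt.1 hy).1, (abs_lt.1 hy).2⟩
    rcases lt_or_gt_of_ne hy0 with h | h
    · have := hmono hymem h0mem h
      simp only [Complex.ofReal_zero, zero_mul, hG0, Complex.zero_im] at this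
      exact div_pos_of_neg_of_neg this h
    · have := hmono h0mem hymem h
      simp only [Complex.ofReal_zero, zero_mul, hG0, Complex.zero_im] at this
      exact div_pos this h
  intro z hz
  obtain ⟨hzball, hz0⟩ := hz
  simp only [Set.mem_singleton_iff] at hz0
  by_cases hzre : z.re = 0
  · -- z on the imaginary axis
    have hzy : z = (z.im : ℂ) * I := by
      apply Complex.ext <;> simp [hzre]
    have hyim : |z.im| < r := by
      have : ‖z‖ < r := by simpa [mem_ball_zero_iff] using hzball
      exact lt_of_le_of_lt (Complex.abs_im_le_norm z) this
    have hy0 : z.im ≠ 0 := fun h => hz0 (Complex.ext hzre h)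
    have hGre : (G z).re = 0 := by rw [hre z hzball, hzre]
    have hGz : G z = ((G z).im : ℂ) * I := by
      apply Complex.ext <;> simp [hGre]
    have hratio : G z / z = (((G z).im / z.im : ℝ) : ℂ) := by
      calc G z / z = ((G z).im : ℂ) * I / (((z.im : ℂ)) * I) := by rw [← hGz, ← hzy]
        _ = ((G z).im : ℂ) / (z.im : ℂ) := mul_div_mul_right _ _ Complex.I_ne_zero
        _ = (((G z).im / z.im : ℝ) : ℂ) := by push_cast; ring
    rw [hratio]
    refine Complex.mem_slitPlane_iff.2 (Or.inl ?_)
    simp only [Complex.ofReal_re]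
    have := hsign z.im hyim hy0
    rwa [← hzy] at this
  · -- Re z ≠ 0
    by_contra hmem
    rw [Complex.mem_slitPlane_iff] at hmem
    push_neg at hmem
    obtain ⟨h1, h2⟩ := hmem
    set c := (G z / z).re with hc
    have h3 : G z / z = (c : ℂ) := Complex.ext (by simp [hc]) (by simp [h2])
    have hcz : G z = (c : ℂ) * z := by
      rw [← h3, div_mul_cancel₀ _ hz0]
    have hre' : z.re = c * z.re := by
      conv_lhs => rw [← hre z hzball, hcz]
      simp [Complex.mul_re]
    have h4 : (c - 1) * z.re = 0 := by
      have : (c - 1) * z.re = c * z.re - z.re := by ring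
      rw [this, ← hre', sub_self]
    rcases mul_eq_zero.1 h4 with h | h
    · have : c = 1 := by linarith
      linarith
    · exact hzre h


/-- a smooth logarithm lift of `G ∈ 𝔙₊` exists on `exp⁻¹(U \ {0})` for an open disk
`U` centered at `0`, and every continuous lift has monodromy exactly `2πi`. -/
theorem stmt9 (G : ℂ → ℂ) (r : ℝ) (hr : 0 < r) (hG : MemVplus G (Metric.ball 0 r)) :
    (∃ Λ : ℂ → ℂ, IsLogLift G Λ (Metric.ball 0 r)) ∧
      ∀ Λ : ℂ → ℂ, ContinuousOn Λ (expPre (Metric.ball 0 r)) →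
        (∀ w ∈ expPre (Metric.ball 0 r), Complex.exp (Λ w) = G (Complex.exp w)) →
        ∀ w ∈ expPre (Metric.ball 0 r),
          Λ (w + 2 * Real.pi * Complex.I) = Λ w + 2 * Real.pi * Complex.I := by
  have hA := keyA G r hr hG
  obtain ⟨hU, h0, hcd, hG0, hre, hpy⟩ := hG
  set q : ℂ → ℂ := fun w => G (Complex.exp w) * Complex.exp (-w) with hqdef
  have hq_eq : ∀ w : ℂ, q w = G (Complex.exp w) / Complex.exp w := by
    intro w
    rw [hqdef]
    simp only [Complex.exp_neg, div_eq_mul_inv]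
  set Λ₀ : ℂ → ℂ := fun w => w + Complex.log (q w) with hΛ₀def
  have hslit : ∀ w ∈ expPre (Metric.ball (0:ℂ) r), q w ∈ Complex.slitPlane := by
    intro w hw
    rw [hq_eq]
    exact hA _ hw
  have hGne : ∀ w ∈ expPre (Metric.ball (0:ℂ) r), G (Complex.exp w) ≠ 0 := by
    intro w hw h
    apply Complex.slitPlane_ne_zero (hslit w hw)
    rw [hqdef]
    simp [h]
  have hexpΛ₀ : ∀ w ∈ expPre (Metric.ball (0:ℂ) r),
      Complex.exp (Λ₀ w) = G (Complex.exp w) := by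
    intro w hw
    rw [hΛ₀def]
    simp only
    rw [Complex.exp_add, Complex.exp_log (Complex.slitPlane_ne_zero (hslit w hw)), hq_eq]
    field_simp
  have hΛ₀cd : ContDiffOn ℝ (⊤ : ℕ∞) Λ₀ (expPre (Metric.ball (0:ℂ) r)) := by
    intro w hw
    apply ContDiffAt.contDiffWithinAt
    have hexp : ContDiffAt ℝ (⊤ : ℕ∞) Complex.exp w := Complex.contDiff_exp.contDiffAt
    have hexpn : ContDiffAt ℝ (⊤ : ℕ∞) (fun w : ℂ => Complex.exp (-w)) w :=
      Complex.contDiff_exp.contDiffAt.comp w (contDiffAt_id.neg)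
    have hball : Metric.ball (0:ℂ) r ∈ nhds (Complex.exp w) := hU.mem_nhds hw.1
    have hGat : ContDiffAt ℝ (⊤ : ℕ∞) G (Complex.exp w) := hcd.contDiffAt hball
    have hqat : ContDiffAt ℝ (⊤ : ℕ∞) q w := (hGat.comp w hexp).mul hexpn
    have hlog : ContDiffAt ℝ (⊤ : ℕ∞) Complex.log (q w) :=
      (Complex.contDiffAt_log (hslit w hw)).restrict_scalars ℝ
    exact contDiffAt_id.add (hlog.comp w hqat)
  have hΛ₀cont : ContinuousOn Λ₀ (expPre (Metric.ball (0:ℂ) r)) := hΛ₀cd.continuousOn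
  refine ⟨⟨Λ₀, hΛ₀cd, hexpΛ₀⟩, ?_⟩
  -- monodromy
  have hVchar : expPre (Metric.ball (0:ℂ) r) = {w : ℂ | w.re < Real.log r} := by
    ext w
    simp only [expPre, Set.mem_preimage, Set.mem_diff, mem_ball_zero_iff,
      Set.mem_singleton_iff, Set.mem_setOf_eq, Complex.norm_exp,
      Complex.exp_ne_zero, not_false_eq_true, and_true]
    rw [← Real.exp_log hr, Real.exp_lt_exp, Real.exp_log hr]
  have hVpre : IsPreconnected (expPre (Metric.ball (0:ℂ) r)) := by
    rw [hVchar]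
    exact (convex_halfSpace_re_lt _).isPreconnected
  intro Λ hΛc hΛe
  have hint : ∀ w ∈ expPre (Metric.ball (0:ℂ) r),
      ∃ n : ℤ, Λ w - Λ₀ w = n * (2 * Real.pi * I) := by
    intro w hw
    rw [← Complex.exp_eq_one_iff, Complex.exp_sub, hΛe w hw, hexpΛ₀ w hw,
      div_self (hGne w hw)]
  set φ : ℂ → ℝ := fun w => (Λ w - Λ₀ w).im with hφdef
  have hφcont : ContinuousOn φ (expPre (Metric.ball (0:ℂ) r)) :=
    Complex.continuous_im.comp_continuousOn (hΛc.sub hΛ₀cont)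
  have hφval : ∀ w ∈ expPre (Metric.ball (0:ℂ) r),
      ∃ n : ℤ, φ w = n * (2 * Real.pi) := by
    intro w hw
    obtain ⟨n, hn⟩ := hint w hw
    refine ⟨n, ?_⟩
    rw [hφdef]
    simp only
    rw [hn]
    simp [Complex.mul_im]
  have hltfalse : ∀ w1 ∈ expPre (Metric.ball (0:ℂ) r),
      ∀ w2 ∈ expPre (Metric.ball (0:ℂ) r), φ w1 < φ w2 → False := by
    intro w1 h1 w2 h2 hlt
    obtain ⟨n1, hn1⟩ := hφval w1 h1
    obtain ⟨n2, hn2⟩ := hφval w2 h2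
    have hmid : φ w1 + Real.pi ∈ Set.Icc (φ w1) (φ w2) := by
      constructor
      · linarith [Real.pi_pos]
      · rw [hn1, hn2] at hlt ⊢
        have hn12 : (n1 : ℝ) < n2 := by
          have := Real.pi_pos
          nlinarith
        have : (n1 : ℝ) + 1 ≤ n2 := by exact_mod_cast Int.add_one_le_of_lt (by exact_mod_cast hn12)
        nlinarith [Real.pi_pos]
    obtain ⟨w3, h3, hw3⟩ := hVpre.intermediate_value h1 h2 hφcont hmid
    obtain ⟨n3, hn3⟩ := hφval w3 h3
    rw [hn3, hn1] at hw3
    have : (2 * (n3 - n1) : ℝ) = 1 := by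
      have := Real.pi_pos
      nlinarith
    have : (2 * (n3 - n1) : ℤ) = 1 := by exact_mod_cast this
    omega
  have hconst : ∀ w1 ∈ expPre (Metric.ball (0:ℂ) r),
      ∀ w2 ∈ expPre (Metric.ball (0:ℂ) r), φ w1 = φ w2 := by
    intro w1 h1 w2 h2
    rcases lt_trichotomy (φ w1) (φ w2) with h | h | h
    · exact absurd h (fun h => hltfalse w1 h1 w2 h2 h)
    · exact h
    · exact absurd h (fun h => hltfalse w2 h2 w1 h1 h)
  intro w hw
  have hw' : w + 2 * Real.pi * I ∈ expPre (Metric.ball (0:ℂ) r) := by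
    rw [hVchar] at hw ⊢
    simpa using hw
  have hexpper : Complex.exp (w + 2 * Real.pi * I) = Complex.exp w := by
    rw [Complex.exp_add, Complex.exp_two_pi_mul_I, mul_one]
  have hΛ₀per : Λ₀ (w + 2 * Real.pi * I) = Λ₀ w + 2 * Real.pi * I := by
    rw [hΛ₀def]
    simp only
    rw [hqdef]
    simp only [neg_add, Complex.exp_add (-w), hexpper]
    rw [Complex.exp_neg (2 * Real.pi * I), Complex.exp_two_pi_mul_I, inv_one, mul_one]
    ring
  obtain ⟨n1, hn1⟩ := hint w hw
  obtain ⟨n2, hn2⟩ := hint _ hw'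
  have hφeq : φ (w + 2 * Real.pi * I) = φ w := hconst _ hw' _ hw
  have hφ1 : φ w = (n1 : ℝ) * (2 * Real.pi) := by
    rw [hφdef]; simp only; rw [hn1]; simp [Complex.mul_im]
  have hφ2 : φ (w + 2 * Real.pi * I) = (n2 : ℝ) * (2 * Real.pi) := by
    rw [hφdef]; simp only; rw [hn2]; simp [Complex.mul_im]
  have hn12 : n1 = n2 := by
    have hπ : (2 * Real.pi : ℝ) ≠ 0 := by positivity
    have : (n1 : ℝ) * (2 * Real.pi) = (n2 : ℝ) * (2 * Real.pi) := by
      rw [← hφ1, ← hφ2, hφeq]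
    exact_mod_cast mul_right_cancel₀ hπ this
  have e2 := eq_add_of_sub_eq hn2
  have e1 := eq_add_of_sub_eq hn1
  rw [e2, hΛ₀per, e1, hn12]
  ring
end
end

section
/- Let a ∈ ℝ and b > 0, and let L : ℂ → ℂ be the real-linear map L(x + iy) = x + i(ax + by). Set μ = (1 − b + ia)/(1 + b − ia). Then |μ| < 1, and L(z) = z/(1 + conj(μ)) + μ·conj(z)/(1 + μ) for all z ∈ ℂ; that is, L equals the map G_μ, so the first-order invariant μ of a germ with linearization L lies in the open unit disk and determines the linearization. -/
open Complex Metric Set Filter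

noncomputable section

/-- for `a ∈ ℝ`, `b > 0`, the real-linear map `x + iy ↦ x + i(ax + by)` equals
`G_μ` with `μ = (1 − b + ia)/(1 + b − ia)`, and `|μ| < 1`. -/
theorem stmt11 (a b : ℝ) (hb : 0 < b) (L : ℂ → ℂ)
    (hL : ∀ x y : ℝ, L (x + y * Complex.I) = x + (a * x + b * y) * Complex.I) :
    ‖(1 - (b : ℂ) + (a : ℂ) * Complex.I) / (1 + (b : ℂ) - (a : ℂ) * Complex.I)‖ < 1 ∧
      ∀ z : ℂ,
        L z = Gmu ((1 - (b : ℂ) + (a : ℂ) * Complex.I) / (1 + (b : ℂ) - (a : ℂ) * Complex.I)) z := by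
  
  have hden : (1 + (b : ℂ) - (a : ℂ) * Complex.I) ≠ 0 := by
    intro h
    have := congrArg Complex.re h
    simp at this
    linarith
  have hden' : (1 + (b : ℂ) + (a : ℂ) * Complex.I) ≠ 0 := by
    intro h
    have := congrArg Complex.re h
    simp at this
    linarith
  set μ := (1 - (b : ℂ) + (a : ℂ) * Complex.I) / (1 + (b : ℂ) - (a : ℂ) * Complex.I) with hμ
  have h1μ : 1 + μ = 2 / (1 + (b : ℂ) - (a : ℂ) * Complex.I) := by
    rw [hμ]; field_simp; ring
  have h1μ0 : (1 : ℂ) + μ ≠ 0 := by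
    rw [h1μ]; exact div_ne_zero two_ne_zero hden
  have hconjμ : starRingEnd ℂ μ = (1 - (b:ℂ) - (a:ℂ)*Complex.I) / (1 + (b:ℂ) + (a:ℂ)*Complex.I) := by
    rw [hμ, map_div₀]
    simp [Complex.conj_I, Complex.conj_ofReal]
    ring_nf
  have h1μ' : 1 + starRingEnd ℂ μ = 2 / (1 + (b : ℂ) + (a : ℂ) * Complex.I) := by
    rw [hconjμ]; field_simp; ring
  have h1μ0' : (1 : ℂ) + starRingEnd ℂ μ ≠ 0 := by
    rw [h1μ']; exact div_ne_zero two_ne_zero hden'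
  constructor
  · rw [hμ, norm_div, div_lt_one (norm_pos_iff.mpr hden)]
    have h1 : ‖(1 - (b : ℂ) + (a : ℂ) * Complex.I)‖ = Real.sqrt ((1-b)^2 + a^2) := by
      rw [Complex.norm_def, Complex.normSq_apply]; norm_num; ring_nf
    have h2 : ‖(1 + (b : ℂ) - (a : ℂ) * Complex.I)‖ = Real.sqrt ((1+b)^2 + a^2) := by
      rw [Complex.norm_def, Complex.normSq_apply]; norm_num; ring_nf
    rw [h1, h2]
    apply Real.sqrt_lt_sqrt (by positivity)
    nlinarith
  · intro z
    obtain ⟨x, y⟩ := z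
    rw [Complex.mk_eq_add_mul_I, hL]
    have hconjz : starRingEnd ℂ ((x : ℂ) + (y : ℂ) * Complex.I) = (x : ℂ) - (y : ℂ) * Complex.I := by
      simp [Complex.conj_I, Complex.conj_ofReal]
      ring
    show _ = Gmu μ _
    simp only [Gmu, hconjz, h1μ, h1μ']
    rw [hμ]
    field_simp
    ring
end
end

section
/- Let G belong to 𝔙₊ on an open disk U centered at 0 in ℂ and let Λ be a logarithm lift of G on V = exp⁻¹(U∖{0}). Then the function F : V → ℝ defined by F(w) = Im(G(eʷ)·Λ(w) − G(eʷ)) − Im(eʷ·w − eʷ) satisfies F(w + 2πi) = F(w) for all w ∈ V; consequently there exists a unique smooth function on U∖{0} whose composition with exp equals F. (The multi-valued germ Im(G ln G − G) − Im(z ln z − z) is single-valued, since the monodromies of Im(G ln G) and of Im(z ln z) both equal 2π·Re(z).) -/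
open Complex Metric Set Filter

noncomputable section

/-! ### Auxiliary lemmas -/

lemma mem_expPre_iff {r : ℝ} {w : ℂ} :
    w ∈ expPre (Metric.ball 0 r) ↔ Real.exp w.re < r := by
  simp [expPre, Metric.mem_ball, Complex.dist_eq, Complex.exp_ne_zero, Complex.norm_exp]

/-- `G` never maps a point of the punctured ball to a negative real multiple of itself. -/
lemma noNeg {G : ℂ → ℂ} {r : ℝ} (hr : 0 < r) (hG : MemVplus G (Metric.ball 0 r))
    {z : ℂ} (hz : z ∈ Metric.ball (0:ℂ) r) (hz0 : z ≠ 0) {s : ℝ} (hs : 0 < s)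
    (heq : G z = -(s:ℂ) * z) : False := by
  obtain ⟨hUo, hU0, hGs, hG0, hGre, hGy⟩ := hG
  have hre : (G z).re = z.re := hGre z hz
  rw [heq] at hre
  have hre' : -(s * z.re) = z.re := by
    simpa [Complex.mul_re] using hre
  have hzre : z.re = 0 := by nlinarith
  set y := z.im with hy
  have hzy : z = (y:ℂ) * Complex.I := by
    rw [← Complex.re_add_im z, hzre]; simp [hy]
  have hyne : y ≠ 0 := by
    intro h; apply hz0; rw [hzy, h]; simp
  set f : ℝ → ℝ := fun t => (G ((t:ℂ) * Complex.I)).im with hf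
  have hmemt : ∀ t : ℝ, t ∈ Set.Ioo (-r) r → (t:ℂ) * Complex.I ∈ Metric.ball (0:ℂ) r := by
    intro t ht
    simp only [Metric.mem_ball, Complex.dist_eq, sub_zero, map_mul, Complex.norm_I,
      Complex.norm_real, mul_one, norm_mul, Real.norm_eq_abs]
    exact abs_lt.2 ⟨ht.1, ht.2⟩
  have hmono : StrictMonoOn f (Set.Ioo (-r) r) := by
    apply strictMonoOn_of_deriv_pos (convex_Ioo _ _)
    · exact Complex.continuous_im.comp_continuousOn
        (hGs.continuousOn.comp ((continuous_ofReal.mul continuous_const).continuousOn) hmemt)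
    · intro t ht
      rw [interior_Ioo] at ht
      have h2 := hGy _ (hmemt t ht)
      unfold imPartialY at h2
      have e1 : ((t:ℂ) * Complex.I).re = 0 := by simp
      have e2 : ((t:ℂ) * Complex.I).im = t := by simp
      rw [e1, e2] at h2
      simpa [f] using h2
  have hf0 : f 0 = 0 := by simp [f, hG0]
  have h0mem : (0:ℝ) ∈ Set.Ioo (-r) r := by constructor <;> linarith
  have hymem : y ∈ Set.Ioo (-r) r := by
    have h1 : |y| ≤ ‖z‖ := Complex.abs_im_le_norm z
    have h2 : ‖z‖ < r := by simpa [Complex.dist_eq] using hz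
    have := abs_lt.1 (lt_of_le_of_lt h1 h2)
    exact ⟨this.1, this.2⟩
  have hfy : f y = -(s * y) := by
    rw [hf]; simp only [← hzy, heq]
    simp [Complex.mul_im, hzre, hy]
  rcases lt_or_gt_of_ne hyne with h | h
  · have := hmono hymem h0mem h
    rw [hf0, hfy] at this
    nlinarith
  · have := hmono h0mem hymem h
    rw [hf0, hfy] at this
    nlinarith

/-- The imaginary part of `Λ w − w` avoids odd multiples of `π`. -/
lemma avoid {G Λ : ℂ → ℂ} {r : ℝ} (hr : 0 < r) (hG : MemVplus G (Metric.ball 0 r))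
    (hΛ : IsLogLift G Λ (Metric.ball 0 r)) {w : ℂ} (hw : w ∈ expPre (Metric.ball 0 r))
    (k : ℤ) : (Λ w - w).im ≠ Real.pi + 2 * Real.pi * k := by
  intro h
  set ζ := Λ w - w with hζdef
  have him : (ζ.im : ℂ) * Complex.I = (Real.pi : ℂ) * Complex.I + (k:ℂ) * (2 * Real.pi * Complex.I) := by
    rw [h]; push_cast; ring
  have hexpζ : Complex.exp ζ = -(Real.exp ζ.re : ℂ) := by
    have e0 : Complex.exp ζ = Complex.exp (ζ.re : ℂ) * Complex.exp ((ζ.im : ℂ) * Complex.I) := by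
      rw [← Complex.exp_add, Complex.re_add_im]
    rw [e0, him, Complex.exp_add, Complex.exp_pi_mul_I,
      Complex.exp_int_mul_two_pi_mul_I, ← Complex.ofReal_exp]
    ring
  have hG' : G (Complex.exp w) = -(Real.exp ζ.re : ℂ) * Complex.exp w := by
    rw [← hΛ.2 w hw, ← hexpζ, hζdef, Complex.exp_sub]
    field_simp
  exact noNeg hr hG hw.1 (Complex.exp_ne_zero w) (Real.exp_pos ζ.re) hG'

/-- The function whose `2πi`-periodicity is at stake. -/
def Ffun (G Λ : ℂ → ℂ) (w : ℂ) : ℝ :=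
  (G (Complex.exp w) * Λ w - G (Complex.exp w)).im - (Complex.exp w * w - Complex.exp w).im

lemma period1 {G Λ : ℂ → ℂ} {r : ℝ} (hr : 0 < r) (hG : MemVplus G (Metric.ball 0 r))
    (hΛ : IsLogLift G Λ (Metric.ball 0 r)) {w : ℂ} (hw : w ∈ expPre (Metric.ball 0 r)) :
    Ffun G Λ (w + 2 * Real.pi * Complex.I) = Ffun G Λ w := by
  have pi_pos := Real.pi_pos
  set c : ℂ := 2 * Real.pi * Complex.I with hcdef
  have hcre : c.re = 0 := by simp [hcdef]
  have hcim : c.im = 2 * Real.pi := by simp [hcdef]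
  have hexp : Complex.exp (w + c) = Complex.exp w := by
    rw [Complex.exp_add, hcdef, Complex.exp_two_pi_mul_I, mul_one]
  have hw' : w + c ∈ expPre (Metric.ball 0 r) := by
    rw [mem_expPre_iff] at hw ⊢
    simpa [Complex.add_re, hcre] using hw
  obtain ⟨m, hm⟩ : ∃ m : ℤ, Λ (w + c) = Λ w + m * (2 * (Real.pi:ℂ) * Complex.I) :=
    Complex.exp_eq_exp_iff_exists_int.1 (by rw [hΛ.2 _ hw', hexp, ← hΛ.2 _ hw])
  have hm1 : m = 1 := by
    by_contra hne
    set u : ℂ → ℝ := fun v => ((Λ v - v).im - Real.pi) / (2 * Real.pi) with hu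
    have havoid : ∀ v ∈ expPre (Metric.ball 0 r), ∀ j : ℤ, u v ≠ j := by
      intro v hv j hj
      apply avoid hr hG hΛ hv j
      have : ((Λ v - v).im - Real.pi) = 2 * Real.pi * j := by
        rw [hu] at hj; field_simp at hj; simp only [Complex.sub_im] at hj ⊢; linarith
      linarith
    set ψ : ℝ → ℝ := fun t => u (w + t * c) with hψ
    have hpath : ∀ t : ℝ, w + (t:ℂ) * c ∈ expPre (Metric.ball 0 r) := by
      intro t
      rw [mem_expPre_iff] at hw ⊢
      simpa [Complex.add_re, Complex.mul_re, hcre, hcim] using hw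
    have hψcont : ContinuousOn ψ (Set.uIcc 0 1) := by
      have h1 : ContinuousOn (fun v => (Λ v - v).im) (expPre (Metric.ball 0 r)) :=
        Complex.continuous_im.comp_continuousOn (hΛ.1.continuousOn.sub continuousOn_id)
      have h2 : Continuous (fun t : ℝ => w + (t:ℂ) * c) := by continuity
      have : ContinuousOn (fun t : ℝ => (Λ (w + (t:ℂ) * c) - (w + (t:ℂ) * c)).im) (Set.uIcc 0 1) :=
        h1.comp h2.continuousOn (fun t _ => hpath t)
      exact (this.sub continuousOn_const).div_const _
    have hψ0 : ψ 0 = u w := by simp [hψ]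
    have hψ1 : ψ 1 = u (w + c) := by simp [hψ]
    have hdiff : ψ 1 - ψ 0 = (m : ℝ) - 1 := by
      rw [hψ0, hψ1, hu]
      simp only [hm]
      have e1 : (Λ w + (m:ℂ) * (2 * (Real.pi:ℂ) * Complex.I) - (w + c)).im
          = (Λ w - w).im + ((m:ℝ) - 1) * (2 * Real.pi) := by
        simp [Complex.add_im, Complex.sub_im, Complex.mul_im, hcim, hcre]
        ring
      rw [e1]
      field_simp
      ring
    set a := ψ 0
    set b := ψ 1
    have hba : b - a = (m:ℝ) - 1 := hdiff
    have habs : (1:ℝ) ≤ |b - a| := by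
      rw [hba]
      have : (1:ℤ) ≤ |m - 1| := Int.one_le_abs (by omega)
      calc (1:ℝ) ≤ |(m - 1 : ℤ)| := by exact_mod_cast this
        _ = |(m:ℝ) - 1| := by push_cast; ring_nf
    set j : ℤ := ⌊min a b⌋ + 1 with hj
    have hjmem : (j:ℝ) ∈ Set.uIcc a b := by
      have h1 : min a b < j := by
        have := Int.lt_floor_add_one (min a b); push_cast [hj]; push_cast at this; linarith
      have h2 : (j:ℝ) ≤ max a b := by
        have h3 : (⌊min a b⌋ : ℝ) ≤ min a b := Int.floor_le _
        have h4 : min a b + 1 ≤ max a b := by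
          rcases abs_cases (b - a) with ⟨he, _⟩ | ⟨he, _⟩
          · rw [he] at habs
            rw [min_def, max_def]; split_ifs <;> linarith
          · rw [he] at habs
            rw [min_def, max_def]; split_ifs <;> linarith
        push_cast [hj]; linarith
      rw [Set.mem_uIcc]
      rcases le_total a b with hab | hab
      · left; rw [min_eq_left hab] at h1; rw [max_eq_right hab] at h2
        exact ⟨le_of_lt h1, h2⟩
      · right; rw [min_eq_right hab] at h1; rw [max_eq_left hab] at h2
        exact ⟨le_of_lt h1, h2⟩
    have hsub := intermediate_value_uIcc hψcont
    obtain ⟨t, _, hψt⟩ := hsub hjmem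
    exact havoid _ (hpath t) j hψt
  have hΛp : Λ (w + c) = Λ w + c := by
    rw [hm, hm1, hcdef]; push_cast; ring
  have hre : (G (Complex.exp w)).re = (Complex.exp w).re :=
    hG.2.2.2.2.1 _ hw.1
  show Ffun G Λ (w + c) = Ffun G Λ w
  unfold Ffun
  rw [hexp, hΛp]
  have e1 : ∀ x : ℂ, (x * c).im = x.re * (2 * Real.pi) := by
    intro x; rw [Complex.mul_im, hcre, hcim]; ring
  simp only [mul_add, Complex.add_im, Complex.sub_im, e1]
  rw [hre]
  ring

section
variable {G Λ : ℂ → ℂ} {r : ℝ} (hr : 0 < r) (hG : MemVplus G (Metric.ball 0 r))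
    (hΛ : IsLogLift G Λ (Metric.ball 0 r))

lemma hVopen : IsOpen (expPre (Metric.ball 0 r)) :=
  (isOpen_ball.sdiff isClosed_singleton).preimage Complex.continuous_exp

include hr hG hΛ in
lemma periodZ : ∀ (k : ℤ), ∀ w ∈ expPre (Metric.ball 0 r),
    Ffun G Λ (w + k * (2 * (Real.pi:ℂ) * Complex.I)) = Ffun G Λ w := by
  have hmem : ∀ (v : ℂ) (k : ℤ), v ∈ expPre (Metric.ball 0 r) →
      v + k * (2 * (Real.pi:ℂ) * Complex.I) ∈ expPre (Metric.ball 0 r) := by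
    intro v k hv
    rw [mem_expPre_iff] at hv ⊢
    simpa [Complex.add_re, Complex.mul_re] using hv
  intro k
  induction k using Int.induction_on with
  | zero => intro w hw; norm_num
  | succ n ih =>
    intro w hw
    have e : w + ((n:ℤ)+1 : ℤ) * (2 * (Real.pi:ℂ) * Complex.I)
        = (w + (n:ℤ) * (2 * (Real.pi:ℂ) * Complex.I)) + 2 * Real.pi * Complex.I := by
      push_cast; ring
    rw [e, period1 hr hG hΛ (hmem w n hw), ih w hw]
  | pred n ih =>
    intro w hw
    have hstep : ∀ v ∈ expPre (Metric.ball 0 r),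
        Ffun G Λ (v - 2 * Real.pi * Complex.I) = Ffun G Λ v := by
      intro v hv
      have hv' : v - 2 * Real.pi * Complex.I ∈ expPre (Metric.ball 0 r) := by
        rw [mem_expPre_iff] at hv ⊢
        simpa [Complex.sub_re] using hv
      have h4 := period1 hr hG hΛ hv'
      have e : v - 2 * Real.pi * Complex.I + 2 * Real.pi * Complex.I = v := by ring
      rw [e] at h4
      exact h4.symm
    have e : ((-(n:ℤ)-1 : ℤ) : ℂ) * (2 * (Real.pi:ℂ) * Complex.I)
        = ((-(n:ℤ) : ℤ) : ℂ) * (2 * (Real.pi:ℂ) * Complex.I) - 2 * Real.pi * Complex.I := by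
      push_cast; ring
    have e2 : w + ((-(n:ℤ)-1 : ℤ) : ℂ) * (2 * (Real.pi:ℂ) * Complex.I)
        = (w + ((-(n:ℤ) : ℤ) : ℂ) * (2 * (Real.pi:ℂ) * Complex.I)) - 2 * Real.pi * Complex.I := by
      rw [e]; ring
    rw [e2, hstep _ (hmem w (-(n:ℤ)) hw), ih w hw]

include hr hG hΛ in
lemma F_congr {w w' : ℂ} (hw : w ∈ expPre (Metric.ball 0 r))
    (h : Complex.exp w' = Complex.exp w) : Ffun G Λ w' = Ffun G Λ w := by
  obtain ⟨n, hn⟩ := Complex.exp_eq_exp_iff_exists_int.1 h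
  rw [hn]
  exact periodZ hr hG hΛ n w hw

include hG hΛ in
lemma F_smooth : ContDiffOn ℝ (⊤ : ℕ∞) (Ffun G Λ) (expPre (Metric.ball 0 r)) := by
  have hmaps : ∀ w ∈ expPre (Metric.ball 0 r), Complex.exp w ∈ Metric.ball (0:ℂ) r :=
    fun w hw => hw.1
  have hexp : ContDiff ℝ (⊤ : ℕ∞) Complex.exp := Complex.contDiff_exp
  have hGe : ContDiffOn ℝ (⊤ : ℕ∞) (fun w => G (Complex.exp w)) (expPre (Metric.ball 0 r)) :=
    hG.2.2.1.comp hexp.contDiffOn hmaps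
  have h1 : ContDiffOn ℝ (⊤ : ℕ∞) (fun w => (G (Complex.exp w) * Λ w - G (Complex.exp w)).im)
      (expPre (Metric.ball 0 r)) := by
    have := Complex.imCLM.contDiff.comp_contDiffOn ((hGe.mul hΛ.1).sub hGe)
    simpa [Function.comp_def] using this
  have h2 : ContDiffOn ℝ (⊤ : ℕ∞) (fun w => (Complex.exp w * w - Complex.exp w).im)
      (expPre (Metric.ball 0 r)) := by
    have := Complex.imCLM.contDiff.comp_contDiffOn
      ((hexp.contDiffOn.mul contDiffOn_id).sub (hexp.contDiffOn (s := expPre (Metric.ball 0 r))))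
    simpa [Function.comp_def] using this
  exact h1.sub h2

include hr hG hΛ in
lemma S_smooth : ContDiffOn ℝ (⊤ : ℕ∞) (fun z => Ffun G Λ (Complex.log z))
    (Metric.ball (0:ℂ) r \ {0}) := by
  intro z₀ hz₀
  have hz₀0 : z₀ ≠ 0 := fun h => hz₀.2 (by simp [h])
  have hw₀ : Complex.log z₀ ∈ expPre (Metric.ball 0 r) := by
    simp only [expPre, Set.mem_preimage, Complex.exp_log hz₀0]
    exact hz₀
  have hL : ContDiffAt ℝ (⊤ : ℕ∞) (fun z : ℂ => Complex.log z₀ + Complex.log (z / z₀)) z₀ := by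
    have hdiv : ContDiff ℂ (⊤ : ℕ∞) (fun z : ℂ => z / z₀) := contDiff_id.div_const z₀
    have hlog : ContDiffAt ℂ (⊤ : ℕ∞) Complex.log (z₀ / z₀) := by
      apply Complex.contDiffAt_log
      rw [div_self hz₀0]
      exact Complex.one_mem_slitPlane
    exact contDiffAt_const.add
      ((ContDiffAt.comp (g := Complex.log) (f := fun z : ℂ => z / z₀) z₀ hlog
        hdiv.contDiffAt).restrict_scalars ℝ)
  have hFat : ContDiffAt ℝ (⊤ : ℕ∞) (Ffun G Λ) (Complex.log z₀ + Complex.log (z₀ / z₀)) := by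
    rw [div_self hz₀0, Complex.log_one, add_zero]
    exact (F_smooth hG hΛ).contDiffAt ((hVopen).mem_nhds hw₀)
  have hg : ContDiffAt ℝ (⊤ : ℕ∞) (fun z => Ffun G Λ (Complex.log z₀ + Complex.log (z / z₀))) z₀ :=
    by have := hFat.comp z₀ hL; exact this
  have hWopen : IsOpen {z : ℂ | z ≠ 0 ∧ z / z₀ ∈ Complex.slitPlane ∧ z ∈ Metric.ball (0:ℂ) r} := by
    apply IsOpen.inter isOpen_ne
    exact (Complex.isOpen_slitPlane.preimage (continuous_id.div_const z₀)).inter isOpen_ball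
  have hmemW : z₀ ∈ {z : ℂ | z ≠ 0 ∧ z / z₀ ∈ Complex.slitPlane ∧ z ∈ Metric.ball (0:ℂ) r} := by
    refine ⟨hz₀0, ?_, hz₀.1⟩
    rw [div_self hz₀0]; exact Complex.one_mem_slitPlane
  have hev : (fun z => Ffun G Λ (Complex.log z₀ + Complex.log (z / z₀)))
      =ᶠ[nhds z₀] (fun z => Ffun G Λ (Complex.log z)) := by
    filter_upwards [hWopen.mem_nhds hmemW] with z hz
    obtain ⟨hz1, hz2, hz3⟩ := hz
    have hdiv0 : z / z₀ ≠ 0 := div_ne_zero hz1 hz₀0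
    have he1 : Complex.exp (Complex.log z₀ + Complex.log (z / z₀)) = z := by
      rw [Complex.exp_add, Complex.exp_log hz₀0, Complex.exp_log hdiv0]
      field_simp
    have he2 : Complex.exp (Complex.log z) = z := Complex.exp_log hz1
    have hzV : Complex.log z ∈ expPre (Metric.ball 0 r) := by
      simp only [expPre, Set.mem_preimage, he2]
      exact ⟨hz3, hz1⟩
    exact F_congr hr hG hΛ hzV (by rw [he1, he2])
  exact ((hg.congr_of_eventuallyEq hev.symm)).contDiffWithinAt

end

/-- the multi-valued germ `Im(G ln G − G) − Im(z ln z − z)` is single-valued: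
`F(w) = Im(G(eʷ)Λ(w) − G(eʷ)) − Im(eʷ·w − eʷ)` is `2πi`-periodic on `exp⁻¹(U \ {0})` and hence
descends to a unique smooth function on `U \ {0}`. -/
theorem stmt12 (G Λ : ℂ → ℂ) (r : ℝ) (hr : 0 < r)
    (hG : MemVplus G (Metric.ball 0 r)) (hΛ : IsLogLift G Λ (Metric.ball 0 r)) :
    (∀ w ∈ expPre (Metric.ball 0 r),
      (G (Complex.exp (w + 2 * Real.pi * Complex.I)) * Λ (w + 2 * Real.pi * Complex.I) -
            G (Complex.exp (w + 2 * Real.pi * Complex.I))).im -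
          (Complex.exp (w + 2 * Real.pi * Complex.I) * (w + 2 * Real.pi * Complex.I) -
            Complex.exp (w + 2 * Real.pi * Complex.I)).im =
        (G (Complex.exp w) * Λ w - G (Complex.exp w)).im -
          (Complex.exp w * w - Complex.exp w).im) ∧
    ∃ S : ℂ → ℝ,
      (ContDiffOn ℝ (⊤ : ℕ∞) S (Metric.ball 0 r \ {0}) ∧
        ∀ w ∈ expPre (Metric.ball 0 r),
          S (Complex.exp w) =
            (G (Complex.exp w) * Λ w - G (Complex.exp w)).im -
              (Complex.exp w * w - Complex.exp w).im) ∧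
      ∀ S' : ℂ → ℝ,
        (ContDiffOn ℝ (⊤ : ℕ∞) S' (Metric.ball 0 r \ {0}) ∧
          ∀ w ∈ expPre (Metric.ball 0 r),
            S' (Complex.exp w) =
              (G (Complex.exp w) * Λ w - G (Complex.exp w)).im -
                (Complex.exp w * w - Complex.exp w).im) →
        Set.EqOn S' S (Metric.ball 0 r \ {0}) := by
  constructor
  · intro w hw
    exact period1 hr hG hΛ hw
  · refine ⟨fun z => Ffun G Λ (Complex.log z), ⟨S_smooth hr hG hΛ, ?_⟩, ?_⟩
    · intro w hw
      have he : Complex.exp (Complex.log (Complex.exp w)) = Complex.exp w :=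
        Complex.exp_log (Complex.exp_ne_zero w)
      exact F_congr hr hG hΛ hw he
    · rintro S' ⟨-, hS'⟩ z hz
      have hz0 : z ≠ 0 := fun h => hz.2 (by simp [h])
      have he : Complex.exp (Complex.log z) = z := Complex.exp_log hz0
      have hzV : Complex.log z ∈ expPre (Metric.ball 0 r) := by
        simp only [expPre, Set.mem_preimage, he]
        exact hz
      have h1 := hS' _ hzV
      rw [he] at h1
      show S' z = Ffun G Λ (Complex.log z)
      rw [h1]
      unfold Ffun
      rw [he]
end
end
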